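/- arXiv:1808.01415 — 3 statements merged into one kernel-verified Lean document; each statement's English description precedes it below -/
import Mathlib

section
/- Type II merging with p-norm aggregation, p ≥ 2, is 1-Lipschitz in a summed sense: if z(x) = (Σ_{k=1}^K |σ_k(y_k(x))|^p)^{1/p} and z̃ is defined analogously from ỹ_k, with each σ_k 1-Lipschitz, then ‖z − z̃‖₂² ≤ Σ_{k=1}^K ‖y_k − ỹ_k‖₂². -/
/-!
Pointwise, the reverse triangle inequality for the `ℓᵖ` norm and the `1`-Lipschitz property of
each `σ k` bound `|z x - z̃ x|` by the `ℓᵖ` norm of `k ↦ ‖y k x - ỹ k x‖`, which for `p ≥ 2` is at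
most its `ℓ²` norm. Squaring and integrating gives the claim.
-/

open MeasureTheory Finset

namespace Real

variable {ι : Type*} {s : Finset ι}

theorem sum_rpow_le_rpow_sum {f : ι → ℝ} (hf : ∀ i ∈ s, 0 ≤ f i) {r : ℝ} (hr : 1 ≤ r) :
    ∑ i ∈ s, f i ^ r ≤ (∑ i ∈ s, f i) ^ r := by
  induction s using Finset.cons_induction with
  | empty => simp [zero_rpow (by linarith : r ≠ 0)]
  | cons i s hi ih =>
    have hf' : ∀ j ∈ s, 0 ≤ f j := fun j hj => hf j (mem_cons_of_mem hj)
    rw [sum_cons, sum_cons]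
    calc f i ^ r + ∑ j ∈ s, f j ^ r ≤ f i ^ r + (∑ j ∈ s, f j) ^ r := by gcongr; exact ih hf'
      _ ≤ (f i + ∑ j ∈ s, f j) ^ r :=
        add_rpow_le_rpow_add (hf i (mem_cons_self i s)) (sum_nonneg hf') hr

theorem Lp_le_Lq_of_le {f : ι → ℝ} (hf : ∀ i ∈ s, 0 ≤ f i) {p q : ℝ} (hq : 0 < q)
    (hqp : q ≤ p) : (∑ i ∈ s, f i ^ p) ^ (1 / p) ≤ (∑ i ∈ s, f i ^ q) ^ (1 / q) := by
  have hp : 0 < p := hq.trans_le hqp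
  have hfq : ∀ i ∈ s, 0 ≤ f i ^ q := fun i hi => rpow_nonneg (hf i hi) q
  calc (∑ i ∈ s, f i ^ p) ^ (1 / p) = (∑ i ∈ s, (f i ^ q) ^ (p / q)) ^ (1 / p) := by
        congr 1
        refine sum_congr rfl fun i hi => ?_
        rw [← rpow_mul (hf i hi), mul_div_cancel₀ p hq.ne']
    _ ≤ ((∑ i ∈ s, f i ^ q) ^ (p / q)) ^ (1 / p) := by
        gcongr
        · exact sum_nonneg fun i hi => rpow_nonneg (hfq i hi) _
        · exact sum_rpow_le_rpow_sum hfq ((one_le_div hq).2 hqp)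
    _ = (∑ i ∈ s, f i ^ q) ^ (1 / q) := by
        rw [← rpow_mul (sum_nonneg hfq)]
        field_simp

theorem abs_Lp_sub_Lp_le (s : Finset ι) (f g : ι → ℝ) {p : ℝ} (hp : 1 ≤ p) :
    |(∑ i ∈ s, |f i| ^ p) ^ (1 / p) - (∑ i ∈ s, |g i| ^ p) ^ (1 / p)| ≤
      (∑ i ∈ s, |f i - g i| ^ p) ^ (1 / p) := by
  have hfg := Lp_add_le s (fun i => f i - g i) g hp
  have hgf := Lp_add_le s (fun i => g i - f i) f hp
  simp only [sub_add_cancel, abs_sub_comm (g _)] at hfg hgf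
  rw [abs_sub_le_iff]
  constructor <;> linarith

end Real

section TypeIIMerge

variable {ι E F : Type*} [Fintype ι] [SeminormedAddCommGroup E] [SeminormedAddCommGroup F]

noncomputable def typeIIMerge (p : ℝ) (σ : ι → E → F) (a : ι → E) : ℝ :=
  (∑ k, ‖σ k (a k)‖ ^ p) ^ (1 / p)

theorem sq_typeIIMerge_sub_le {p : ℝ} (hp : 2 ≤ p) {σ : ι → E → F}
    (hσ : ∀ k, LipschitzWith 1 (σ k)) (a b : ι → E) :
    (typeIIMerge p σ a - typeIIMerge p σ b) ^ 2 ≤ ∑ k, ‖a k - b k‖ ^ 2 := by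
  have hσab : ∀ k, |‖σ k (a k)‖ - ‖σ k (b k)‖| ≤ ‖a k - b k‖ := fun k =>
    (abs_norm_sub_norm_le _ _).trans (by simpa using (hσ k).norm_sub_le (a k) (b k))
  have hLp : |typeIIMerge p σ a - typeIIMerge p σ b| ≤ (∑ k, ‖a k - b k‖ ^ p) ^ (1 / p) := by
    have := Real.abs_Lp_sub_Lp_le univ (fun k => ‖σ k (a k)‖) (fun k => ‖σ k (b k)‖)
      (by linarith : (1 : ℝ) ≤ p)
    simp only [abs_norm] at this
    refine this.trans ?_
    gcongr with k
    exact hσab k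
  have hL2 : (∑ k, ‖a k - b k‖ ^ p) ^ (1 / p) ≤ (∑ k, ‖a k - b k‖ ^ (2 : ℝ)) ^ (1 / 2 : ℝ) :=
    Real.Lp_le_Lq_of_le (fun k _ => norm_nonneg _) two_pos hp
  calc (typeIIMerge p σ a - typeIIMerge p σ b) ^ 2
      ≤ ((∑ k, ‖a k - b k‖ ^ (2 : ℝ)) ^ (1 / 2 : ℝ)) ^ 2 := by
        rw [← sq_abs]
        gcongr
        exact hLp.trans hL2
    _ = ∑ k, ‖a k - b k‖ ^ 2 := by
        rw [← Real.sqrt_eq_rpow, Real.sq_sqrt (sum_nonneg fun k _ => by positivity)]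
        simp only [Real.rpow_two]

end TypeIIMerge

/-- Type II merging with `p`-norm aggregation, `p ≥ 2`, is 1-Lipschitz in a summed sense:
if `z(x) = (Σ_k |σ_k(y_k(x))|^p)^{1/p}` (and analogously for `z̃`), with each `σ_k`
1-Lipschitz, then `‖z − z̃‖₂² ≤ Σ_k ‖y_k − ỹ_k‖₂²`. -/
theorem typeII_merge_lipschitz_p_ge_two (d K : ℕ) (p : ℝ) (hp : 2 ≤ p)
    (y yt : Fin K → (Fin d → ℝ) → ℂ)
    (hy : ∀ k, MemLp (y k) 2 volume) (hyt : ∀ k, MemLp (yt k) 2 volume)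
    (σ : Fin K → ℂ → ℂ) (hσ : ∀ k, LipschitzWith 1 (σ k))
    (z zt : (Fin d → ℝ) → ℝ)
    (hz : ∀ x, z x = (∑ k, ‖σ k (y k x)‖ ^ p) ^ (1 / p))
    (hzt : ∀ x, zt x = (∑ k, ‖σ k (yt k x)‖ ^ p) ^ (1 / p)) :
    ∫ x, (z x - zt x) ^ 2 ∂volume ≤ ∑ k, ∫ x, ‖y k x - yt k x‖ ^ 2 ∂volume := by
  have hint : ∀ k ∈ univ, Integrable (fun x => ‖y k x - yt k x‖ ^ 2) volume := fun k _ =>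
    ((hy k).sub (hyt k)).integrable_norm_pow two_ne_zero
  have hpt : ∀ x, (z x - zt x) ^ 2 ≤ ∑ k, ‖y k x - yt k x‖ ^ 2 := fun x => by
    rw [hz, hzt]
    exact sq_typeIIMerge_sub_le hp hσ (fun k => y k x) (fun k => yt k x)
  calc ∫ x, (z x - zt x) ^ 2 ∂volume ≤ ∫ x, ∑ k, ‖y k x - yt k x‖ ^ 2 ∂volume :=
        integral_mono_of_nonneg (.of_forall fun x => sq_nonneg _) (integrable_finsetSum _ hint)
          (.of_forall hpt)
    _ = ∑ k, ∫ x, ‖y k x - yt k x‖ ^ 2 ∂volume := integral_finsetSum _ hint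
end

section
/- Type II merging with p-norm aggregation, 1 ≤ p < 2, satisfies ‖z − z̃‖₂² ≤ K^{2/p − 1} · Σ_{k=1}^K ‖y_k − ỹ_k‖₂², where z(x) = (Σ_{k=1}^K |σ_k(y_k(x))|^p)^{1/p} and z̃ is defined analogously from ỹ_k, with each σ_k 1-Lipschitz. -/
/-!
Pointwise, `|z − z̃|` is a difference of `ℓ^p` norms, so by the reverse Minkowski inequality and
the 1-Lipschitz property of the `σ_k` it is at most the `ℓ^p` norm of `(‖y_k − ỹ_k‖)_k`.
For `p ≤ 2` the power mean inequality `(∑ a_k)^q ≤ K^{q-1} ∑ a_k^q`, applied with `a_k = c_k^p`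
and `q = 2/p ≥ 1`, bounds the square of an `ℓ^p` norm by `K^{2/p − 1}` times the square of the
`ℓ²` norm. Integrating gives the theorem.
-/

open MeasureTheory Finset

section LpSums

variable {ι : Type*} (s : Finset ι) {p : ℝ}

lemma sq_Lp_le_card_rpow_mul_sum_sq (hp0 : 0 < p) (hp2 : p ≤ 2) {f : ι → ℝ}
    (hf : ∀ i ∈ s, 0 ≤ f i) :
    ((∑ i ∈ s, f i ^ p) ^ (1 / p)) ^ 2 ≤ (#s : ℝ) ^ (2 / p - 1) * ∑ i ∈ s, f i ^ 2 := by
  have hsum : 0 ≤ ∑ i ∈ s, f i ^ p := sum_nonneg fun i hi => Real.rpow_nonneg (hf i hi) p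
  have hq : 1 ≤ 2 / p := by rw [le_div_iff₀ hp0]; linarith
  have hpow : ∀ i ∈ s, (f i ^ p) ^ (2 / p) = f i ^ 2 := fun i hi => by
    rw [← Real.rpow_mul (hf i hi), mul_div_cancel₀ _ hp0.ne', Real.rpow_two]
  calc ((∑ i ∈ s, f i ^ p) ^ (1 / p)) ^ 2
      = (∑ i ∈ s, f i ^ p) ^ (2 / p) := by
        rw [← Real.rpow_natCast, ← Real.rpow_mul hsum]; ring_nf
    _ ≤ (#s : ℝ) ^ (2 / p - 1) * ∑ i ∈ s, (f i ^ p) ^ (2 / p) :=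
        Real.rpow_sum_le_const_mul_sum_rpow_of_nonneg s hq
          fun i hi => Real.rpow_nonneg (hf i hi) p
    _ = (#s : ℝ) ^ (2 / p - 1) * ∑ i ∈ s, f i ^ 2 := by rw [sum_congr rfl hpow]

variable {E : Type*} [SeminormedAddCommGroup E]

lemma Lp_norm_sub_Lp_norm_le (hp : 1 ≤ p) (f g : ι → E) :
    (∑ i ∈ s, ‖f i‖ ^ p) ^ (1 / p) - (∑ i ∈ s, ‖g i‖ ^ p) ^ (1 / p)
      ≤ (∑ i ∈ s, ‖f i - g i‖ ^ p) ^ (1 / p) := by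
  have hmono : (∑ i ∈ s, ‖f i‖ ^ p) ^ (1 / p)
      ≤ (∑ i ∈ s, (‖g i‖ + ‖f i - g i‖) ^ p) ^ (1 / p) := by
    gcongr with i
    exact norm_le_norm_add_norm_sub' (f i) (g i)
  have hminkowski := Real.Lp_add_le_of_nonneg (s := s) hp
    (fun i _ => norm_nonneg (g i)) (fun i _ => norm_nonneg (f i - g i))
  linarith

lemma abs_Lp_norm_sub_Lp_norm_le (hp : 1 ≤ p) (f g : ι → E) :
    |(∑ i ∈ s, ‖f i‖ ^ p) ^ (1 / p) - (∑ i ∈ s, ‖g i‖ ^ p) ^ (1 / p)|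
      ≤ (∑ i ∈ s, ‖f i - g i‖ ^ p) ^ (1 / p) := by
  refine abs_sub_le_iff.2 ⟨Lp_norm_sub_Lp_norm_le s hp f g, ?_⟩
  simpa only [norm_sub_rev] using Lp_norm_sub_Lp_norm_le s hp g f

lemma sq_Lp_norm_comp_sub_Lp_norm_comp_le {F : Type*} [SeminormedAddCommGroup F] (hp1 : 1 ≤ p)
    (hp2 : p ≤ 2) (σ : ι → E → F) (hσ : ∀ i, LipschitzWith 1 (σ i)) (u v : ι → E) :
    ((∑ i ∈ s, ‖σ i (u i)‖ ^ p) ^ (1 / p) - (∑ i ∈ s, ‖σ i (v i)‖ ^ p) ^ (1 / p)) ^ 2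
      ≤ (#s : ℝ) ^ (2 / p - 1) * ∑ i ∈ s, ‖u i - v i‖ ^ 2 := by
  have hσuv : ∀ i ∈ s, ‖σ i (u i) - σ i (v i)‖ ≤ ‖u i - v i‖ := fun i _ => by
    simpa only [dist_eq_norm, NNReal.coe_one, one_mul] using (hσ i).dist_le_mul (u i) (v i)
  calc _ = |(∑ i ∈ s, ‖σ i (u i)‖ ^ p) ^ (1 / p) - (∑ i ∈ s, ‖σ i (v i)‖ ^ p) ^ (1 / p)| ^ 2 :=
        (sq_abs _).symm
    _ ≤ ((∑ i ∈ s, ‖σ i (u i) - σ i (v i)‖ ^ p) ^ (1 / p)) ^ 2 := by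
        gcongr; exact abs_Lp_norm_sub_Lp_norm_le s hp1 _ _
    _ ≤ ((∑ i ∈ s, ‖u i - v i‖ ^ p) ^ (1 / p)) ^ 2 := by
        gcongr with i hi
        exact hσuv i hi
    _ ≤ (#s : ℝ) ^ (2 / p - 1) * ∑ i ∈ s, ‖u i - v i‖ ^ 2 :=
        sq_Lp_le_card_rpow_mul_sum_sq s (zero_lt_one.trans_le hp1) hp2 fun i _ => norm_nonneg _

end LpSums

/-- Type II merging with `p`-norm aggregation, `1 ≤ p < 2`, satisfies
`‖z − z̃‖₂² ≤ K^{2/p − 1} · Σ_k ‖y_k − ỹ_k‖₂²`, where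
`z(x) = (Σ_k |σ_k(y_k(x))|^p)^{1/p}` and each `σ_k` is 1-Lipschitz. -/
theorem typeII_merge_lipschitz_p_lt_two (d K : ℕ) (p : ℝ) (hp1 : 1 ≤ p) (hp2 : p < 2)
    (y yt : Fin K → (Fin d → ℝ) → ℂ)
    (hy : ∀ k, MemLp (y k) 2 volume) (hyt : ∀ k, MemLp (yt k) 2 volume)
    (σ : Fin K → ℂ → ℂ) (hσ : ∀ k, LipschitzWith 1 (σ k))
    (z zt : (Fin d → ℝ) → ℝ)
    (hz : ∀ x, z x = (∑ k, ‖σ k (y k x)‖ ^ p) ^ (1 / p))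
    (hzt : ∀ x, zt x = (∑ k, ‖σ k (yt k x)‖ ^ p) ^ (1 / p)) :
    ∫ x, (z x - zt x) ^ 2 ∂volume
      ≤ (K : ℝ) ^ (2 / p - 1) * ∑ k, ∫ x, ‖y k x - yt k x‖ ^ 2 ∂volume := by
  have hpointwise : ∀ x, (z x - zt x) ^ 2 ≤ (K : ℝ) ^ (2 / p - 1) * ∑ k, ‖y k x - yt k x‖ ^ 2 :=
    fun x => by
      simpa only [hz, hzt, card_univ, Fintype.card_fin] using
        sq_Lp_norm_comp_sub_Lp_norm_comp_le univ hp1 hp2.le σ hσ (fun k => y k x)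
          (fun k => yt k x)
  have hint : ∀ k, Integrable (fun x => ‖y k x - yt k x‖ ^ 2) volume := fun k =>
    ((hy k).sub (hyt k)).integrable_norm_pow two_ne_zero
  calc ∫ x, (z x - zt x) ^ 2 ∂volume
      ≤ ∫ x, (K : ℝ) ^ (2 / p - 1) * ∑ k, ‖y k x - yt k x‖ ^ 2 ∂volume :=
        integral_mono_of_nonneg (.of_forall fun x => sq_nonneg _)
          ((integrable_finsetSum _ fun k _ => hint k).const_mul _) (.of_forall hpointwise)
    _ = (K : ℝ) ^ (2 / p - 1) * ∑ k, ∫ x, ‖y k x - yt k x‖ ^ 2 ∂volume := by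
        rw [integral_const_mul, integral_finsetSum _ fun k _ => hint k]
end

section
/- Every feasible point of the linear program with y₀ = 1, y_m + z_m ≤ B⁽¹⁾_m y_{m−1} (1 ≤ m ≤ M−1), z_M ≤ B⁽¹⁾_M y_{M−1}, y_m ≤ B⁽¹⁾_m y_{m−1}, and y_m, z_m ≥ 0 satisfies Σ_{m=1}^M z_m ≤ Π_{m=1}^M max{1, B⁽¹⁾_m}. -/
open Finset

/-! Telescoping with a potential: `Σ_{m ≤ n} z_m + y_n` grows by a factor of at most
`max 1 B_m` at step `m`, because `y_m + z_m ≤ B_m y_{m-1}`. Since `y_0 = 1` and `y_M = 0`,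
the potential at `M` is the sum of the `z_m`. -/

theorem add_mul_le_max_one_mul_add {S b y : ℝ} (hS : 0 ≤ S) (hy : 0 ≤ y) :
    S + b * y ≤ max 1 b * (S + y) := by
  rw [mul_add]
  exact add_le_add (le_mul_of_one_le_left hS (le_max_left 1 b))
    (mul_le_mul_of_nonneg_right (le_max_right 1 b) hy)

theorem sum_add_le_prod_max_one_mul {B y z : ℕ → ℝ} (hy : ∀ m, 0 ≤ y m) (hz : ∀ m, 0 ≤ z m)
    (n : ℕ) (h : ∀ m ∈ Icc 1 n, y m + z m ≤ B m * y (m - 1)) :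
    ∑ m ∈ Icc 1 n, z m + y n ≤ (∏ m ∈ Icc 1 n, max 1 (B m)) * y 0 := by
  induction n with
  | zero => simp
  | succ n ih =>
    have hstep : y (n + 1) + z (n + 1) ≤ B (n + 1) * y n := by
      simpa using h (n + 1) (by simp)
    have hprev := ih fun m hm => h m (Icc_subset_Icc_right n.le_succ hm)
    calc ∑ m ∈ Icc 1 (n + 1), z m + y (n + 1)
        = ∑ m ∈ Icc 1 n, z m + (y (n + 1) + z (n + 1)) := by
          rw [sum_Icc_succ_top (by omega)]; ring
      _ ≤ ∑ m ∈ Icc 1 n, z m + B (n + 1) * y n := by gcongr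
      _ ≤ max 1 (B (n + 1)) * (∑ m ∈ Icc 1 n, z m + y n) :=
          add_mul_le_max_one_mul_add (sum_nonneg fun m _ => hz m) (hy n)
      _ ≤ max 1 (B (n + 1)) * ((∏ m ∈ Icc 1 n, max 1 (B m)) * y 0) := by
          gcongr
      _ = (∏ m ∈ Icc 1 (n + 1), max 1 (B m)) * y 0 := by
          rw [prod_Icc_succ_top (by omega)]; ring

theorem lipschitz_lp_product_bound_general (M : ℕ) (B1 : ℕ → ℝ) (y z : ℕ → ℝ)
    (hy0 : y 0 = 1) (hyM : y M = 0)
    (h1 : ∀ m, 1 ≤ m → m ≤ M - 1 → y m + z m ≤ B1 m * y (m - 1))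
    (hM1 : z M ≤ B1 M * y (M - 1))
    (hy : ∀ m, 0 ≤ y m) (hz : ∀ m, 0 ≤ z m) :
    ∑ m ∈ Icc 1 M, z m ≤ ∏ m ∈ Icc 1 M, max 1 (B1 m) := by
  have hfeas : ∀ m ∈ Icc 1 M, y m + z m ≤ B1 m * y (m - 1) := by
    intro m hm
    obtain ⟨hm1, hmM⟩ := mem_Icc.mp hm
    rcases (show m ≤ M - 1 ∨ m = M by omega) with hlt | rfl
    · exact h1 m hm1 hlt
    · rwa [hyM, zero_add]
  simpa [hy0, hyM] using sum_add_le_prod_max_one_mul hy hz M hfeas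

/-- Every feasible point of the linear program with `y₀ = 1`,
`y_m + z_m ≤ B⁽¹⁾_m y_{m−1}` (`1 ≤ m ≤ M−1`), `z_M ≤ B⁽¹⁾_M y_{M−1}`,
`y_m ≤ B⁽¹⁾_m y_{m−1}`, `y_M = 0`, and `y_m, z_m ≥ 0` satisfies
`Σ_{m=1}^M z_m ≤ Π_{m=1}^M max{1, B⁽¹⁾_m}`. -/
theorem lipschitz_lp_product_bound (M : ℕ) (hM : 1 ≤ M) (B1 : ℕ → ℝ)
    (hB1 : ∀ m, 0 ≤ B1 m) (y z : ℕ → ℝ)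
    (hy0 : y 0 = 1) (hyM : y M = 0)
    (h1 : ∀ m, 1 ≤ m → m ≤ M - 1 → y m + z m ≤ B1 m * y (m - 1))
    (hM1 : z M ≤ B1 M * y (M - 1))
    (h2 : ∀ m, 1 ≤ m → m ≤ M - 1 → y m ≤ B1 m * y (m - 1))
    (hy : ∀ m, 0 ≤ y m) (hz : ∀ m, 0 ≤ z m) :
    ∑ m ∈ Icc 1 M, z m ≤ ∏ m ∈ Icc 1 M, max 1 (B1 m) :=
  lipschitz_lp_product_bound_general M B1 y z hy0 hyM h1 hM1 hy hz
end
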